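/- Let S be an inverse semigroup. The functor Q from the category of unitary right S-sets to PSh(C(S)), defined by Q(X)(e) = Xe = {x ∈ X : xe = x} and, for a morphism (e,s,f) of C(S), Q(X)(e,s,f) : Xe → Xf, x ↦ xs, is an equivalence of categories; in particular the category of unitary right S-sets is equivalent to the category of presheaves on the Cauchy completion C(S). -/

import Mathlib

universe u

open CategoryTheory

/-- An inverse semigroup: every element has a unique (von Neumann) inverse,
selected by `star`. -/
class InverseSemigroup (S : Type u) extends Semigroup S where
  star : S → S
  mul_star_mul : ∀ s : S, s * star s * s = s
  star_mul_star : ∀ s : S, star s * s * star s = star s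
  star_unique : ∀ s t : S, s * t * s = s → t * s * t = t → t = star s

namespace InverseSemigroup

variable {S : Type u} [InverseSemigroup S]

theorem star_star (s : S) : star (star s) = s :=
  (star_unique (star s) s (star_mul_star s) (mul_star_mul s)).symm

theorem star_idem {e : S} (he : e * e = e) : star e = e :=
  (star_unique e e (by rw [he, he]) (by rw [he, he])).symm

theorem mul_idem {e f : S} (he : e * e = e) (hf : f * f = f) :
    (e * f) * (e * f) = e * f := by
  set x := star (e * f) with hx
  have hxfix : (e * f) * x * (e * f) = e * f := mul_star_mul (e * f)
  have hxfix' : x * (e * f) * x = x := star_mul_star (e * f)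
  have he1 : ∀ y : S, e * (e * y) = e * y := fun y => by rw [← mul_assoc, he]
  have hf1 : ∀ y : S, f * (f * y) = f * y := fun y => by rw [← mul_assoc, hf]
  have A : e * (f * (x * (e * f))) = e * f := by
    simpa only [mul_assoc] using hxfix
  have B1 : ∀ y : S, x * (e * (f * (x * y))) = x * y := fun y => by
    have h := congrArg (· * y) hxfix'
    simpa only [mul_assoc] using h
  have h1 : (e * f) * (f * x * e) * (e * f) = e * f := by
    simp only [mul_assoc, hf1, he1]
    exact A
  have h2 : (f * x * e) * (e * f) * (f * x * e) = f * x * e := by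
    simp only [mul_assoc, he1, hf1, B1]
  have hC : f * x * e = x := by
    have := star_unique (e * f) (f * x * e) h1 h2
    rwa [← hx] at this
  have hCn : f * (x * e) = x := by simpa only [mul_assoc] using hC
  have key : (f * (x * e)) * (f * (x * e)) = f * (x * e) := by
    simp only [mul_assoc, B1]
  have hD : x * x = x := by rw [← hCn]; exact key
  have hE : e * f = x := (star_unique x (e * f) hxfix' hxfix).trans (star_idem hD)
  rw [hE]; exact hD

theorem idem_comm {e f : S} (he : e * e = e) (hf : f * f = f) :
    e * f = f * e := by
  have hef : (e * f) * (e * f) = e * f := mul_idem he hf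
  have hfe : (f * e) * (f * e) = f * e := mul_idem hf he
  have he1 : ∀ y : S, e * (e * y) = e * y := fun y => by rw [← mul_assoc, he]
  have hf1 : ∀ y : S, f * (f * y) = f * y := fun y => by rw [← mul_assoc, hf]
  have hefn : e * (f * (e * f)) = e * f := by simpa only [mul_assoc] using hef
  have hfen : f * (e * (f * e)) = f * e := by simpa only [mul_assoc] using hfe
  have h1 : (e * f) * (f * e) * (e * f) = e * f := by
    simp only [mul_assoc, hf1, he1]
    exact hefn
  have h2 : (f * e) * (e * f) * (f * e) = f * e := by
    simp only [mul_assoc, he1, hf1]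
    exact hfen
  have := star_unique (e * f) (f * e) h1 h2
  rw [this, star_idem hef]

theorem star_mul (a b : S) : star (a * b) = star b * star a := by
  set u := star a with hu
  set v := star b with hv
  have han : a * (u * a) = a := by simpa only [mul_assoc] using mul_star_mul a
  have hun : u * (a * u) = u := by simpa only [mul_assoc] using star_mul_star a
  have hbn : b * (v * b) = b := by simpa only [mul_assoc] using mul_star_mul b
  have hvn : v * (b * v) = v := by simpa only [mul_assoc] using star_mul_star b
  have ha1 : ∀ y : S, a * (u * (a * y)) = a * y := fun y => by
    have h := congrArg (· * y) (mul_star_mul a); simpa only [mul_assoc] using h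
  have hv1 : ∀ y : S, v * (b * (v * y)) = v * y := fun y => by
    have h := congrArg (· * y) (star_mul_star b); simpa only [mul_assoc] using h
  have hua : (u * a) * (u * a) = u * a := by
    simp only [mul_assoc]; rw [han]
  have hbv : (b * v) * (b * v) = b * v := by
    simp only [mul_assoc]; rw [hvn]
  have hc : (b * v) * (u * a) = (u * a) * (b * v) := idem_comm hbv hua
  have hc1 : ∀ y : S, b * (v * (u * (a * y))) = u * (a * (b * (v * y))) := fun y => by
    have h := congrArg (· * y) hc; simpa only [mul_assoc] using h
  have goal1 : (a * b) * (v * u) * (a * b) = a * b := by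
    simp only [mul_assoc]
    rw [hc1, ha1, hbn]
  have goal2 : (v * u) * (a * b) * (v * u) = v * u := by
    simp only [mul_assoc]
    rw [← hc1, hv1, hun]
  exact ((star_unique (a * b) (v * u) goal1 goal2)).symm

theorem star_mul_self_idem (s : S) : (star s * s) * (star s * s) = star s * s := by
  have h := congrArg (star s * ·) (mul_star_mul s)
  simpa only [mul_assoc] using h

theorem mul_star_self_idem (s : S) : (s * star s) * (s * star s) = s * star s := by
  have h := congrArg (· * star s) (mul_star_mul s)
  simpa only [mul_assoc] using h

end InverseSemigroup

open InverseSemigroup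

/-- A right `S`-set: a set with an associative right action of the semigroup `S`. -/
structure RSet (S : Type u) [Semigroup S] : Type (u + 1) where
  carrier : Type u
  act : carrier → S → carrier
  act_mul : ∀ (x : carrier) (s t : S), act (act x s) t = act x (s * t)

namespace RSet

variable {S : Type u} [Semigroup S]

/-- `S`-equivariant maps between right `S`-sets. -/
@[ext]
structure Hom (X Y : RSet S) where
  toFun : X.carrier → Y.carrier
  map_act : ∀ (x : X.carrier) (s : S), toFun (X.act x s) = Y.act (toFun x) s

/-- A right `S`-set is unitary if every element is of the form `y • s`. -/
def Unitary (X : RSet S) : Prop := ∀ x : X.carrier, ∃ (y : X.carrier) (s : S), X.act y s = x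

instance homCategory {P : RSet S → Prop} : Category.{u} {X : RSet S // P X} where
  Hom X Y := RSet.Hom X.1 Y.1
  id X := ⟨fun x => x, fun _ _ => rfl⟩
  comp f g := ⟨fun x => g.toFun (f.toFun x), fun x s => by
    simp [f.map_act, g.map_act]⟩

end RSet

/-- The category of unitary right `S`-sets, with `S`-equivariant maps. -/
abbrev USet (S : Type u) [Semigroup S] := {X : RSet S // X.Unitary}

theorem idem_left_absorb {S : Type u} [Semigroup S] {e f s : S}
    (he : e * e = e) (h : e * s * f = s) : e * s = s := by
  conv_lhs => rw [← h]
  rw [← mul_assoc, ← mul_assoc, he]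
  exact h

theorem idem_right_absorb {S : Type u} [Semigroup S] {e f s : S}
    (hf : f * f = f) (h : e * s * f = s) : s * f = s := by
  conv_lhs => rw [← h]
  rw [mul_assoc, hf]
  exact h

/-- The Cauchy completion `C(S)` of a semigroup `S`: objects are the idempotents,
and a morphism `f ⟶ e` is an element `s` with `e * s * f = s`; composition is
multiplication. -/
def CauchyCat (S : Type u) [Semigroup S] : Type u := {e : S // e * e = e}

namespace CauchyCat

variable {S : Type u} [Semigroup S]

instance : Category.{u} (CauchyCat S) where
  Hom f e := {s : S // e.1 * s * f.1 = s}
  id e := ⟨e.1, by rw [e.2, e.2]⟩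
  comp := fun {f g e} u v => ⟨v.1 * u.1, by
    rw [← mul_assoc, idem_left_absorb e.2 v.2, mul_assoc, idem_right_absorb f.2 u.2]⟩
  id_comp := fun {f e} u => Subtype.ext (idem_right_absorb f.2 u.2)
  comp_id := fun {f e} u => Subtype.ext (idem_left_absorb e.2 u.2)
  assoc := fun u v w => Subtype.ext (mul_assoc w.1 v.1 u.1).symm

end CauchyCat

variable (S : Type u) [InverseSemigroup S]

/-- The presheaf on `C(S)` associated with a right `S`-set `X`:
`e ↦ Xe = {x : x • e = x}`, with transition maps given by the action. -/
@[simps]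
def RSet.presheaf (X : RSet S) : (CauchyCat S)ᵒᵖ ⥤ Type u where
  obj e := {x : X.carrier // X.act x e.unop.1 = x}
  map {e f} s := TypeCat.ofHom fun x =>
    ⟨X.act x.1 s.unop.1, by rw [X.act_mul, idem_right_absorb f.unop.2 s.unop.2]⟩
  map_id e := by
    ext x
    exact x.2
  map_comp {a b c} g h := by
    ext x
    exact (X.act_mul x.1 g.unop.1 h.unop.1).symm

/-- The functor `Q` from unitary right `S`-sets to presheaves on the Cauchy
completion `C(S)`: `Q(X)(e) = Xe` and `Q(X)(e,s,f)(x) = x • s`. -/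
@[simps]
def QFunctor : USet S ⥤ ((CauchyCat S)ᵒᵖ ⥤ Type u) where
  obj X := X.1.presheaf S
  map {X Y} f :=
    { app := fun e => TypeCat.ofHom fun x => ⟨f.toFun x.1, by rw [← f.map_act, x.2]⟩
      naturality := fun e f' s => by
        ext x
        exact Subtype.ext (‹RSet.Hom X.1 Y.1›.map_act x.1 s.unop.1) }
  map_id X := by
    apply NatTrans.ext
    funext e
    ext x
    rfl
  map_comp f g := by
    apply NatTrans.ext
    funext e
    ext x
    rfl

/-! A unitary `S`-set is recovered from its presheaf: `x = y s` is fixed by the idempotent `s* s`,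
so `x` lies in some `Xe`, and for `x ∈ Xe ∩ Xf` naturality along `fe` and `ef`, together with
commutation of idempotents, shows that a transformation `Q X ⟶ Q Y` takes the same value at `x`
over `e` and over `f`. Hence `Q` is fully faithful.

Conversely, a presheaf `F` is the image of the set of its elements `(f, x)`, `x ∈ F(f)`, on which `s`
acts through the morphism `f s` from `(f s)* (f s)` to `f`, modulo identifying two elements when all
their translates `x (f s e) ∈ F(e)` agree. The translate of `p t` along `s` is that of `p` along
`t s`, so this identification is compatible with the action and the action is associative. -/

open Opposite

namespace CauchyCat

section Semigroup

variable {T : Type u} [Semigroup T]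

theorem mul_mul_self (x : T) (e : CauchyCat T) : x * e.1 * e.1 = x * e.1 := by
  rw [mul_assoc, e.2]

def corner {e f : CauchyCat T} (s : T) : e ⟶ f :=
  ⟨f.1 * s * e.1, by simp only [← mul_assoc, f.2, mul_mul_self]⟩

@[simp]
theorem corner_val {e f : CauchyCat T} (s : T) : (corner s : e ⟶ f).1 = f.1 * s * e.1 := rfl

theorem corner_self (e : CauchyCat T) : (corner e.1 : e ⟶ e) = 𝟙 e :=
  Subtype.ext (by simp only [corner_val, e.2]; rfl)

variable (F : (CauchyCat T)ᵒᵖ ⥤ Type u)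

theorem map_op_congr {e f : CauchyCat T} {u v : e ⟶ f} (h : u.1 = v.1) (x : F.obj (op f)) :
    F.map u.op x = F.map v.op x := by
  rw [Subtype.ext h]

theorem map_op_map_op {e f g : CauchyCat T} (u : f ⟶ g) (v : e ⟶ f) (w : e ⟶ g)
    (h : u.1 * v.1 = w.1) (x : F.obj (op g)) :
    F.map v.op (F.map u.op x) = F.map w.op x := by
  rw [← Functor.map_comp_apply, ← op_comp]
  exact map_op_congr F h x

end Semigroup

variable {T : Type u} [InverseSemigroup T]

def dom (s : T) : CauchyCat T := ⟨star s * s, star_mul_self_idem s⟩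

theorem mul_mul_mul_rev (e f : CauchyCat T) : e.1 * f.1 * (f.1 * e.1) = e.1 * f.1 := by
  rw [← mul_assoc, mul_mul_self, mul_assoc, idem_comm f.2 e.2, ← mul_assoc, e.2]

@[simp]
theorem mul_dom (s : T) : s * (dom s).1 = s := by
  rw [dom, ← mul_assoc, mul_star_mul]

end CauchyCat

open CauchyCat

section

variable {S}

theorem RSet.Unitary.exists_act_eq_self {X : RSet S} (hX : X.Unitary) (x : X.carrier) :
    ∃ e : CauchyCat S, X.act x e.1 = x := by
  obtain ⟨y, s, rfl⟩ := hX x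
  exact ⟨dom s, by rw [X.act_mul, mul_dom]⟩

namespace QFunctor

variable {X Y : USet S} (α : (QFunctor S).obj X ⟶ (QFunctor S).obj Y)

theorem app_act {e f : CauchyCat S} (s : f ⟶ e) {x z : X.1.carrier} (hx : X.1.act x e.1 = x)
    (hz : X.1.act z f.1 = z) (hxz : X.1.act x s.1 = z) :
    (α.app (op f) ⟨z, hz⟩).1 = Y.1.act (α.app (op e) ⟨x, hx⟩).1 s.1 := by
  subst hxz
  exact congrArg Subtype.val (NatTrans.naturality_apply α s.op ⟨x, hx⟩)

theorem app_eq_app {e f : CauchyCat S} {x : X.1.carrier} (he : X.1.act x e.1 = x)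
    (hf : X.1.act x f.1 = x) : (α.app (op e) ⟨x, he⟩).1 = (α.app (op f) ⟨x, hf⟩).1 := by
  set a := (α.app (op e) ⟨x, he⟩).1
  set b := (α.app (op f) ⟨x, hf⟩).1
  have hfix : ∀ {g h : CauchyCat S}, X.1.act x g.1 = x → X.1.act x h.1 = x →
      X.1.act x (corner h.1 : g ⟶ h).1 = x := fun hg hh => by
    rw [corner_val, ← X.1.act_mul, ← X.1.act_mul, hh, hh, hg]
  have ha : a = Y.1.act b (f.1 * e.1) :=
    (app_act α (corner f.1) hf he (hfix he hf)).trans (by rw [corner_val, f.2])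
  have hb : b = Y.1.act a (e.1 * f.1) :=
    (app_act α (corner e.1) he hf (hfix hf he)).trans (by rw [corner_val, e.2])
  calc a = Y.1.act a (e.1 * f.1 * (f.1 * e.1)) := by rw [← Y.1.act_mul, ← hb, ← ha]
    _ = b := by rw [mul_mul_mul_rev, hb]

noncomputable def preimage : X ⟶ Y :=
  ⟨fun x => (α.app (op (X.2.exists_act_eq_self x).choose)
      ⟨x, (X.2.exists_act_eq_self x).choose_spec⟩).1, fun x s => by
    obtain ⟨e, he⟩ := X.2.exists_act_eq_self x
    have hxs : X.1.act x (e.1 * s) = X.1.act x s := by rw [← X.1.act_mul, he]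
    have hxsg : X.1.act (X.1.act x s) (dom (e.1 * s)).1 = X.1.act x s := by
      rw [← hxs, X.1.act_mul, mul_dom]
    have hfix : Y.1.act (α.app (op e) ⟨x, he⟩).1 e.1 = (α.app (op e) ⟨x, he⟩).1 :=
      (α.app (op e) ⟨x, he⟩).2
    rw [app_eq_app α _ hxsg, app_eq_app α _ he,
      app_act α (corner s) he hxsg (by rw [corner_val, mul_dom, hxs]), corner_val, mul_dom,
      ← Y.1.act_mul, hfix]⟩

noncomputable def fullyFaithful : (QFunctor S).FullyFaithful where
  preimage := preimage
  map_preimage {X _} α := by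
    ext ⟨e⟩ ⟨x, hx⟩
    exact Subtype.ext (app_eq_app α (X.2.exists_act_eq_self x).choose_spec hx)
  preimage_map _ := rfl

end QFunctor

variable (F : (CauchyCat S)ᵒᵖ ⥤ Type u)

def elementAct (p : F.Elements) (s : S) : F.Elements :=
  ⟨op (dom (p.1.unop.1 * s)), F.map (corner s : dom _ ⟶ p.1.unop).op p.2⟩

def elementTranslates (p : F.Elements) (e : CauchyCat S) (s : S) : F.obj (op e) :=
  F.map (corner s : e ⟶ p.1.unop).op p.2

theorem elementTranslates_elementAct (p : F.Elements) (t : S) :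
    elementTranslates F (elementAct F p t) = fun e s => elementTranslates F p e (t * s) := by
  funext e s
  refine map_op_map_op F _ _ _ ?_ p.2
  simp only [corner_val, elementAct, unop_op, ← mul_assoc, mul_dom]

theorem elementTranslates_elementAct_fst (p : F.Elements) :
    elementTranslates F (elementAct F p p.1.unop.1) = elementTranslates F p := by
  rw [elementTranslates_elementAct]
  funext e s
  refine map_op_congr F ?_ p.2
  simp only [corner_val, ← mul_assoc, p.1.unop.2]

def RSet.ofPresheaf : RSet S where
  carrier := Quot fun p q : F.Elements => elementTranslates F p = elementTranslates F q
  act c s := Quot.map (elementAct F · s)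
    (fun p q h => by simp only [elementTranslates_elementAct, h]) c
  act_mul c s t := by
    induction c using Quot.ind with
    | mk p =>
      refine Quot.sound ?_
      simp only [elementTranslates_elementAct, mul_assoc]

theorem RSet.ofPresheaf_act_mk_fst (p : F.Elements) :
    (RSet.ofPresheaf F).act (Quot.mk _ p) p.1.unop.1 = Quot.mk _ p :=
  Quot.sound (elementTranslates_elementAct_fst F p)

theorem RSet.ofPresheaf_unitary : (RSet.ofPresheaf F).Unitary := by
  rintro ⟨p⟩
  exact ⟨Quot.mk _ p, p.1.unop.1, RSet.ofPresheaf_act_mk_fst F p⟩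

def USet.ofPresheaf : USet S := ⟨RSet.ofPresheaf F, RSet.ofPresheaf_unitary F⟩

def USet.ofPresheafEquiv (e : CauchyCat S) :
    F.obj (op e) ≃ ((QFunctor S).obj (USet.ofPresheaf F)).obj (op e) where
  toFun x := ⟨Quot.mk _ ⟨op e, x⟩, RSet.ofPresheaf_act_mk_fst F ⟨op e, x⟩⟩
  invFun c := Quot.lift (fun p => elementTranslates F p e e.1) (fun _ _ h => by rw [h]) c.1
  left_inv x := by
    change F.map (corner e.1 : e ⟶ e).op x = x
    rw [corner_self, op_id, F.map_id_apply]
  right_inv := by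
    rintro ⟨⟨p⟩, hp⟩
    refine Subtype.ext (Eq.trans (Quot.sound ?_) hp)
    rw [elementTranslates_elementAct]
    funext e' s
    refine map_op_map_op F _ _ _ ?_ p.2
    simp only [corner_val, ← mul_assoc, mul_mul_self]

def USet.ofPresheafIso : F ≅ (QFunctor S).obj (USet.ofPresheaf F) :=
  NatIso.ofComponents (fun e => (USet.ofPresheafEquiv F e.unop).toIso) fun {a b} t => by
    ext x
    refine Subtype.ext (Quot.sound (Eq.trans ?_ (elementTranslates_elementAct F ⟨a, x⟩ _).symm))
    funext e s
    refine map_op_map_op F _ _ _ ?_ x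
    simp only [corner_val, unop_op, ← mul_assoc, idem_left_absorb a.unop.2 t.unop.2]
    exact congrArg (· * s * e.1) (idem_right_absorb b.unop.2 t.unop.2)

instance QFunctor.essSurj : (QFunctor S).EssSurj where
  mem_essImage F := ⟨USet.ofPresheaf F, ⟨(USet.ofPresheafIso F).symm⟩⟩

end

/-- For an inverse semigroup `S`, the functor `Q` is an equivalence between the
category of unitary right `S`-sets and the category of presheaves on the Cauchy
completion `C(S)`. -/
theorem qFunctor_isEquivalence_of_inverse : (QFunctor S).IsEquivalence := by
  have hQ := QFunctor.fullyFaithful (S := S)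
  exact { faithful := hQ.faithful, full := hQ.full, essSurj := QFunctor.essSurj }
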